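/- arXiv:1602.05698 — 4 statements merged into one kernel-verified Lean document; each statement's English description precedes it below -/
import Mathlib

section
/- Let U ⊆ ℝ² be open, g : U → ℝ a smooth function, p ∈ ℝ, and (x,y) ∈ U a point with g(x,y) = 0. Write A = x·g_y − y·g_x, B = (xy)·g_x + (1+y²)·g_y, C = (1+x²)·g_x + (xy)·g_y, all evaluated at (x,y). Suppose that for all sufficiently small μ the identity (1−μA)^p · g((x+μB)/(1−μA), (y−μC)/(1−μA)) = (1+μA)^p · g((x−μB)/(1+μA), (y+μC)/(1+μA)) holds. Then at the point (x,y): (1+x²+y²)·(g_xxx·g_y³ − 3·g_xxy·g_y²·g_x + 3·g_xyy·g_y·g_x² − g_yyy·g_x³) + 3·(2−p)·(g_xx·g_y² − 2·g_xy·g_x·g_y + g_yy·g_x²)·(x·g_y − y·g_x) = 0. -/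
/-- Partial derivative in the first variable of a function of two real variables. -/
noncomputable def px (h : ℝ → ℝ → ℝ) : ℝ → ℝ → ℝ := fun x y => deriv (fun t => h t y) x

/-- Partial derivative in the second variable of a function of two real variables. -/
noncomputable def py (h : ℝ → ℝ → ℝ) : ℝ → ℝ → ℝ := fun x y => deriv (fun t => h x t) y

open Filter Metric Set

section Aux

private lemma tendX (a b : ℝ) : Tendsto (fun t : ℝ => ((t, b) : ℝ × ℝ)) (nhds a) (nhds (a, b)) :=
  (continuous_id.prodMk continuous_const).tendsto' a (a, b) rfl

private lemma tendY (a b : ℝ) : Tendsto (fun t : ℝ => ((a, t) : ℝ × ℝ)) (nhds b) (nhds (a, b)) :=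
  (continuous_const.prodMk continuous_id).tendsto' b (a, b) rfl

private lemma sliceX {F : ℝ × ℝ → ℝ} {a b : ℝ} (hF : DifferentiableAt ℝ F (a, b)) :
    HasDerivAt (fun t => F (t, b)) (fderiv ℝ F (a, b) (1, 0)) a := by
  have h1 : HasDerivAt (fun t : ℝ => ((t, b) : ℝ × ℝ)) ((1 : ℝ), (0 : ℝ)) a :=
    HasDerivAt.prodMk (hasDerivAt_id a) (hasDerivAt_const a b)
  exact hF.hasFDerivAt.comp_hasDerivAt a h1

private lemma sliceY {F : ℝ × ℝ → ℝ} {a b : ℝ} (hF : DifferentiableAt ℝ F (a, b)) :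
    HasDerivAt (fun t => F (a, t)) (fderiv ℝ F (a, b) (0, 1)) b := by
  have h1 : HasDerivAt (fun t : ℝ => ((a, t) : ℝ × ℝ)) ((0 : ℝ), (1 : ℝ)) b :=
    HasDerivAt.prodMk (hasDerivAt_const b a) (hasDerivAt_id b)
  exact hF.hasFDerivAt.comp_hasDerivAt b h1

private lemma pxEq {h : ℝ → ℝ → ℝ} {a b : ℝ}
    (hF : DifferentiableAt ℝ (fun q : ℝ × ℝ => h q.1 q.2) (a, b)) :
    px h a b = fderiv ℝ (fun q : ℝ × ℝ => h q.1 q.2) (a, b) (1, 0) := (sliceX hF).deriv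

private lemma pyEq {h : ℝ → ℝ → ℝ} {a b : ℝ}
    (hF : DifferentiableAt ℝ (fun q : ℝ × ℝ => h q.1 q.2) (a, b)) :
    py h a b = fderiv ℝ (fun q : ℝ × ℝ => h q.1 q.2) (a, b) (0, 1) := (sliceY hF).deriv

private lemma smooth_px {U : Set (ℝ × ℝ)} (hU : IsOpen U) {h : ℝ → ℝ → ℝ}
    (hh : ContDiffOn ℝ (⊤ : ℕ∞) (fun q : ℝ × ℝ => h q.1 q.2) U) :
    ContDiffOn ℝ (⊤ : ℕ∞) (fun q : ℝ × ℝ => px h q.1 q.2) U := by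
  have hfd : ContDiffOn ℝ (⊤ : ℕ∞) (fderiv ℝ (fun q : ℝ × ℝ => h q.1 q.2)) U :=
    hh.fderiv_of_isOpen hU (by exact_mod_cast le_top)
  have hHx : ContDiffOn ℝ (⊤ : ℕ∞) (fun q => fderiv ℝ (fun q : ℝ × ℝ => h q.1 q.2) q (1, 0)) U :=
    hfd.clm_apply contDiffOn_const
  refine hHx.congr fun q hq => ?_
  obtain ⟨a, b⟩ := q
  exact pxEq ((hh.contDiffAt (hU.mem_nhds hq)).differentiableAt (by simp))

private lemma smooth_py {U : Set (ℝ × ℝ)} (hU : IsOpen U) {h : ℝ → ℝ → ℝ}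
    (hh : ContDiffOn ℝ (⊤ : ℕ∞) (fun q : ℝ × ℝ => h q.1 q.2) U) :
    ContDiffOn ℝ (⊤ : ℕ∞) (fun q : ℝ × ℝ => py h q.1 q.2) U := by
  have hfd : ContDiffOn ℝ (⊤ : ℕ∞) (fderiv ℝ (fun q : ℝ × ℝ => h q.1 q.2)) U :=
    hh.fderiv_of_isOpen hU (by exact_mod_cast le_top)
  have hHx : ContDiffOn ℝ (⊤ : ℕ∞) (fun q => fderiv ℝ (fun q : ℝ × ℝ => h q.1 q.2) q (0, 1)) U :=
    hfd.clm_apply contDiffOn_const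
  refine hHx.congr fun q hq => ?_
  obtain ⟨a, b⟩ := q
  exact pyEq ((hh.contDiffAt (hU.mem_nhds hq)).differentiableAt (by simp))

private lemma px_congr {U : Set (ℝ × ℝ)} (hU : IsOpen U) {h h' : ℝ → ℝ → ℝ}
    (he : ∀ q ∈ U, h q.1 q.2 = h' q.1 q.2) {a b : ℝ} (hab : (a, b) ∈ U) :
    px h a b = px h' a b := by
  apply Filter.EventuallyEq.deriv_eq
  filter_upwards [(tendX a b).eventually (hU.eventually_mem hab)] with t ht
  exact he (t, b) ht

private lemma py_congr {U : Set (ℝ × ℝ)} (hU : IsOpen U) {h h' : ℝ → ℝ → ℝ}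
    (he : ∀ q ∈ U, h q.1 q.2 = h' q.1 q.2) {a b : ℝ} (hab : (a, b) ∈ U) :
    py h a b = py h' a b := by
  apply Filter.EventuallyEq.deriv_eq
  filter_upwards [(tendY a b).eventually (hU.eventually_mem hab)] with t ht
  exact he (a, t) ht

private lemma clairaut {U : Set (ℝ × ℝ)} (hU : IsOpen U) {h : ℝ → ℝ → ℝ}
    (hh : ContDiffOn ℝ (⊤ : ℕ∞) (fun q : ℝ × ℝ => h q.1 q.2) U) {a b : ℝ}
    (hab : (a, b) ∈ U) : px (py h) a b = py (px h) a b := by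
  set H : ℝ × ℝ → ℝ := fun q => h q.1 q.2 with hH
  have hfd : ContDiffOn ℝ (⊤ : ℕ∞) (fderiv ℝ H) U :=
    hh.fderiv_of_isOpen hU (by exact_mod_cast le_top)
  have hdiffU : ∀ q ∈ U, DifferentiableAt ℝ H q := fun q hq =>
    (hh.contDiffAt (hU.mem_nhds hq)).differentiableAt (by simp)
  have hfdiff : DifferentiableAt ℝ (fderiv ℝ H) (a, b) :=
    (hfd.contDiffAt (hU.mem_nhds hab)).differentiableAt (by simp)
  have hD2 : HasFDerivAt (fderiv ℝ H) (fderiv ℝ (fderiv ℝ H) (a, b)) (a, b) :=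
    hfdiff.hasFDerivAt
  set Hy : ℝ × ℝ → ℝ := fun q => fderiv ℝ H q (0, 1) with hHy
  set Hx : ℝ × ℝ → ℝ := fun q => fderiv ℝ H q (1, 0) with hHx
  have hHyD : HasFDerivAt Hy
      ((ContinuousLinearMap.apply ℝ ℝ (((0 : ℝ), (1 : ℝ)) : ℝ × ℝ)).comp
        (fderiv ℝ (fderiv ℝ H) (a, b))) (a, b) :=
    (ContinuousLinearMap.apply ℝ ℝ (((0 : ℝ), (1 : ℝ)) : ℝ × ℝ)).hasFDerivAt.comp (a, b) hD2
  have hHxD : HasFDerivAt Hx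
      ((ContinuousLinearMap.apply ℝ ℝ (((1 : ℝ), (0 : ℝ)) : ℝ × ℝ)).comp
        (fderiv ℝ (fderiv ℝ H) (a, b))) (a, b) :=
    (ContinuousLinearMap.apply ℝ ℝ (((1 : ℝ), (0 : ℝ)) : ℝ × ℝ)).hasFDerivAt.comp (a, b) hD2
  have hsymm : IsSymmSndFDerivAt ℝ H (a, b) :=
    (hh.contDiffAt (hU.mem_nhds hab)).isSymmSndFDerivAt (by rw [minSmoothness_of_isRCLikeNormedField]; norm_cast)
  have step1 : px (py h) a b = deriv (fun t => Hy (t, b)) a := by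
    apply Filter.EventuallyEq.deriv_eq
    filter_upwards [(tendX a b).eventually (hU.eventually_mem hab)] with t ht
    exact pyEq (hdiffU (t, b) ht)
  have step1' : py (px h) a b = deriv (fun t => Hx (a, t)) b := by
    apply Filter.EventuallyEq.deriv_eq
    filter_upwards [(tendY a b).eventually (hU.eventually_mem hab)] with t ht
    exact pxEq (hdiffU (a, t) ht)
  rw [step1, step1', (sliceX hHyD.differentiableAt).deriv, (sliceY hHxD.differentiableAt).deriv,
    hHyD.fderiv, hHxD.fderiv]
  exact hsymm.eq _ _

/-- directional derivative operator along `(β, -γ)`. -/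
noncomputable def Dop (β γ : ℝ) (h : ℝ → ℝ → ℝ) : ℝ → ℝ → ℝ :=
  fun a b => β * px h a b - γ * py h a b

private lemma line_hasDerivAt {U : Set (ℝ × ℝ)} (hU : IsOpen U) {h : ℝ → ℝ → ℝ}
    (hh : ContDiffOn ℝ (⊤ : ℕ∞) (fun q : ℝ × ℝ => h q.1 q.2) U) (x y β γ : ℝ) {t : ℝ}
    (ht : ((x + t * β, y - t * γ) : ℝ × ℝ) ∈ U) :
    HasDerivAt (fun t => h (x + t * β) (y - t * γ))
      (Dop β γ h (x + t * β) (y - t * γ)) t := by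
  set H : ℝ × ℝ → ℝ := fun q => h q.1 q.2 with hH
  have hdiff : DifferentiableAt ℝ H (x + t * β, y - t * γ) :=
    (hh.contDiffAt (hU.mem_nhds ht)).differentiableAt (by simp)
  have hline : HasDerivAt (fun t : ℝ => ((x + t * β, y - t * γ) : ℝ × ℝ)) ((β, -γ)) t := by
    have h1 : HasDerivAt (fun t : ℝ => x + t * β) β t := by
      simpa using ((hasDerivAt_id t).mul_const β).const_add x
    have h2 : HasDerivAt (fun t : ℝ => y - t * γ) (-γ) t := by
      simpa using ((hasDerivAt_id t).mul_const γ).const_sub y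
    exact HasDerivAt.prodMk h1 h2
  have hcomp := hdiff.hasFDerivAt.comp_hasDerivAt t hline
  have hval : fderiv ℝ H (x + t * β, y - t * γ) ((β, -γ)) =
      Dop β γ h (x + t * β) (y - t * γ) := by
    have hv : ((β, -γ) : ℝ × ℝ) = β • ((1 : ℝ), (0 : ℝ)) - γ • ((0 : ℝ), (1 : ℝ)) := by
      simp [Prod.ext_iff]
    rw [hv, map_sub, map_smul, map_smul, smul_eq_mul, smul_eq_mul, Dop,
      pxEq hdiff, pyEq hdiff]
  rw [hval] at hcomp
  exact hcomp

private lemma px_Dop {U : Set (ℝ × ℝ)} (hU : IsOpen U) {h : ℝ → ℝ → ℝ}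
    (hpx : ContDiffOn ℝ (⊤ : ℕ∞) (fun q : ℝ × ℝ => px h q.1 q.2) U)
    (hpy : ContDiffOn ℝ (⊤ : ℕ∞) (fun q : ℝ × ℝ => py h q.1 q.2) U)
    (β γ : ℝ) {a b : ℝ} (hab : (a, b) ∈ U) :
    px (Dop β γ h) a b = β * px (px h) a b - γ * px (py h) a b := by
  have d1 : DifferentiableAt ℝ (fun t => px h t b) a := by
    have := ((hpx.contDiffAt (hU.mem_nhds hab)).differentiableAt
      (by simp) : DifferentiableAt ℝ (fun q : ℝ × ℝ => px h q.1 q.2) (a, b))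
    exact this.comp (g := fun q : ℝ × ℝ => px h q.1 q.2) (x := a) (DifferentiableAt.prodMk differentiableAt_fun_id (differentiableAt_const b) :
      DifferentiableAt ℝ (fun t : ℝ => ((t, b) : ℝ × ℝ)) a)
  have d2 : DifferentiableAt ℝ (fun t => py h t b) a := by
    have := ((hpy.contDiffAt (hU.mem_nhds hab)).differentiableAt
      (by simp) : DifferentiableAt ℝ (fun q : ℝ × ℝ => py h q.1 q.2) (a, b))
    exact this.comp (g := fun q : ℝ × ℝ => py h q.1 q.2) (x := a) (DifferentiableAt.prodMk differentiableAt_fun_id (differentiableAt_const b) :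
      DifferentiableAt ℝ (fun t : ℝ => ((t, b) : ℝ × ℝ)) a)
  show deriv (fun t => β * px h t b - γ * py h t b) a = _
  rw [deriv_fun_sub ((d1.const_mul β)) ((d2.const_mul γ)), deriv_const_mul β d1,
    deriv_const_mul γ d2]
  rfl

private lemma py_Dop {U : Set (ℝ × ℝ)} (hU : IsOpen U) {h : ℝ → ℝ → ℝ}
    (hpx : ContDiffOn ℝ (⊤ : ℕ∞) (fun q : ℝ × ℝ => px h q.1 q.2) U)
    (hpy : ContDiffOn ℝ (⊤ : ℕ∞) (fun q : ℝ × ℝ => py h q.1 q.2) U)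
    (β γ : ℝ) {a b : ℝ} (hab : (a, b) ∈ U) :
    py (Dop β γ h) a b = β * py (px h) a b - γ * py (py h) a b := by
  have d1 : DifferentiableAt ℝ (fun t => px h a t) b := by
    have := ((hpx.contDiffAt (hU.mem_nhds hab)).differentiableAt
      (by simp) : DifferentiableAt ℝ (fun q : ℝ × ℝ => px h q.1 q.2) (a, b))
    exact this.comp (x := b) (DifferentiableAt.prodMk (differentiableAt_const a) differentiableAt_fun_id)
  have d2 : DifferentiableAt ℝ (fun t => py h a t) b := by
    have := ((hpy.contDiffAt (hU.mem_nhds hab)).differentiableAt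
      (by simp) : DifferentiableAt ℝ (fun q : ℝ × ℝ => py h q.1 q.2) (a, b))
    exact this.comp (x := b) (DifferentiableAt.prodMk (differentiableAt_const a) differentiableAt_fun_id)
  show deriv (fun t => β * px h a t - γ * py h a t) b = _
  rw [deriv_fun_sub ((d1.const_mul β)) ((d2.const_mul γ)), deriv_const_mul β d1,
    deriv_const_mul γ d2]
  rfl

private lemma mu_third (A p : ℝ) (k0 k1 k2 k3 : ℝ → ℝ) (ε : ℝ) (hε : 0 < ε)
    (hRpos : ∀ μ : ℝ, |μ| < ε → (0:ℝ) < 1 - μ * A)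
    (hd0 : ∀ μ : ℝ, |μ| < ε → HasDerivAt k0 (k1 μ * ((1 - μ * A) ^ 2)⁻¹) μ)
    (hd1 : ∀ μ : ℝ, |μ| < ε → HasDerivAt k1 (k2 μ * ((1 - μ * A) ^ 2)⁻¹) μ)
    (hd2 : ∀ μ : ℝ, |μ| < ε → HasDerivAt k2 (k3 μ * ((1 - μ * A) ^ 2)⁻¹) μ)
    (hk00 : k0 0 = 0)
    (heven : ∀ᶠ μ in nhds (0:ℝ),
      (1 - μ * A) ^ p * k0 μ = (1 + μ * A) ^ p * k0 (-μ)) :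
    k3 0 + 3 * (2 - p) * A * k2 0 + 3 * ((p - 1) * (p - 2)) * A ^ 2 * k1 0 = 0 := by
  have hball : ∀ μ : ℝ, μ ∈ ball (0:ℝ) ε → |μ| < ε := by
    intro μ hμ; simpa [Real.norm_eq_abs] using mem_ball_zero_iff.1 hμ
  have hRd : ∀ μ : ℝ, HasDerivAt (fun μ : ℝ => 1 - μ * A) (-A) μ := by
    intro μ; simpa using ((hasDerivAt_id μ).mul_const A).const_sub 1
  have hrpow : ∀ (q : ℝ) (μ : ℝ), |μ| < ε →
      HasDerivAt (fun μ : ℝ => (1 - μ * A) ^ q) ((-(q * A)) * (1 - μ * A) ^ (q - 1)) μ := by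
    intro q μ hμ
    have h0 := Real.hasDerivAt_rpow_const (x := 1 - μ * A) (p := q) (Or.inl (hRpos μ hμ).ne')
    have := h0.comp μ (hRd μ)
    refine this.congr_deriv ?_
    simp [Function.comp]; ring
  have hu : ∀ μ : ℝ, |μ| < ε →
      HasDerivAt (fun μ : ℝ => (1 - μ * A) ^ p) ((-(p * A)) * (1 - μ * A) ^ (p - 1)) μ :=
    hrpow p
  have hu1 : ∀ μ : ℝ, |μ| < ε →
      HasDerivAt (fun μ : ℝ => (-(p * A)) * (1 - μ * A) ^ (p - 1))
        ((p * (p - 1) * A ^ 2) * (1 - μ * A) ^ (p - 2)) μ := by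
    intro μ hμ
    have := (hrpow (p - 1) μ hμ).const_mul (-(p * A))
    refine this.congr_deriv ?_
    rw [show p - 1 - 1 = p - 2 by ring]; ring
  have hu2 : ∀ μ : ℝ, |μ| < ε →
      HasDerivAt (fun μ : ℝ => (p * (p - 1) * A ^ 2) * (1 - μ * A) ^ (p - 2))
        ((-(p * (p - 1) * (p - 2) * A ^ 3)) * (1 - μ * A) ^ (p - 3)) μ := by
    intro μ hμ
    have := (hrpow (p - 2) μ hμ).const_mul (p * (p - 1) * A ^ 2)
    refine this.congr_deriv ?_
    rw [show p - 2 - 1 = p - 3 by ring]; ring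
  have hσ : ∀ μ : ℝ, |μ| < ε →
      HasDerivAt (fun μ : ℝ => ((1 - μ * A) ^ 2)⁻¹) (2 * A * ((1 - μ * A) ^ 3)⁻¹) μ := by
    intro μ hμ
    have h2 : HasDerivAt (fun μ : ℝ => (1 - μ * A) ^ 2)
        ((2 : ℕ) * (1 - μ * A) ^ (2 - 1) * (-A)) μ := (hRd μ).pow 2
    have := h2.inv (pow_ne_zero _ (hRpos μ hμ).ne')
    refine this.congr_deriv ?_
    have h0 := (hRpos μ hμ).ne'
    field_simp
    ring
  have hσ1 : ∀ μ : ℝ, |μ| < ε →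
      HasDerivAt (fun μ : ℝ => 2 * A * ((1 - μ * A) ^ 3)⁻¹)
        (6 * A ^ 2 * ((1 - μ * A) ^ 4)⁻¹) μ := by
    intro μ hμ
    have h2 : HasDerivAt (fun μ : ℝ => (1 - μ * A) ^ 3)
        ((3 : ℕ) * (1 - μ * A) ^ (3 - 1) * (-A)) μ := (hRd μ).pow 3
    have := (h2.inv (pow_ne_zero _ (hRpos μ hμ).ne')).const_mul (2 * A)
    refine this.congr_deriv ?_
    have h0 := (hRpos μ hμ).ne'
    norm_num
    field_simp
    ring
  set Φ : ℝ → ℝ := fun μ => (1 - μ * A) ^ p * k0 μ with hΦdef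
  set Φ1 : ℝ → ℝ := fun μ =>
      (-(p * A)) * (1 - μ * A) ^ (p - 1) * k0 μ +
        (1 - μ * A) ^ p * (k1 μ * ((1 - μ * A) ^ 2)⁻¹) with hΦ1def
  set Φ2 : ℝ → ℝ := fun μ =>
      ((p * (p - 1) * A ^ 2) * (1 - μ * A) ^ (p - 2) * k0 μ +
          (-(p * A)) * (1 - μ * A) ^ (p - 1) * (k1 μ * ((1 - μ * A) ^ 2)⁻¹)) +
        ((-(p * A)) * (1 - μ * A) ^ (p - 1) * (k1 μ * ((1 - μ * A) ^ 2)⁻¹) +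
          (1 - μ * A) ^ p *
            (k2 μ * ((1 - μ * A) ^ 2)⁻¹ * ((1 - μ * A) ^ 2)⁻¹ +
              k1 μ * (2 * A * ((1 - μ * A) ^ 3)⁻¹))) with hΦ2def
  have hDΦ : ∀ μ : ℝ, |μ| < ε → HasDerivAt Φ (Φ1 μ) μ := fun μ hμ =>
    (hu μ hμ).mul (hd0 μ hμ)
  have hDΦ1 : ∀ μ : ℝ, |μ| < ε → HasDerivAt Φ1 (Φ2 μ) μ := fun μ hμ =>
    ((hu1 μ hμ).mul (hd0 μ hμ)).add
      ((hu μ hμ).mul ((hd1 μ hμ).mul (hσ μ hμ)))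
  have hDΦ2 := fun (μ : ℝ) (hμ : |μ| < ε) =>
    (((hu2 μ hμ).mul (hd0 μ hμ)).add
        ((hu1 μ hμ).mul ((hd1 μ hμ).mul (hσ μ hμ)))).add
      (((hu1 μ hμ).mul ((hd1 μ hμ).mul (hσ μ hμ))).add
        ((hu μ hμ).mul
          (((hd2 μ hμ).mul (hσ μ hμ)).mul (hσ μ hμ) |>.add
            ((hd1 μ hμ).mul (hσ1 μ hμ)))))
  have hε0 : |(0:ℝ)| < ε := by simpa using hε
  have e1 : deriv Φ =ᶠ[nhds (0:ℝ)] Φ1 := by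
    filter_upwards [Metric.ball_mem_nhds (0:ℝ) hε] with μ hμ
    exact (hDΦ μ (hball μ hμ)).deriv
  have e2 : deriv Φ1 =ᶠ[nhds (0:ℝ)] Φ2 := by
    filter_upwards [Metric.ball_mem_nhds (0:ℝ) hε] with μ hμ
    exact (hDΦ1 μ (hball μ hμ)).deriv
  have e3 : deriv (deriv (deriv Φ)) 0 = deriv Φ2 0 :=
    ((e1.deriv.trans e2).deriv).eq_of_nhds
  have heven' : Φ =ᶠ[nhds (0:ℝ)] fun μ => Φ (-μ) := by
    filter_upwards [heven] with μ hμ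
    simpa [hΦdef, show (1:ℝ) - -μ * A = 1 + μ * A by ring] using hμ
  have hodd : deriv (deriv (deriv Φ)) 0 = 0 := by
    have E1 : deriv Φ =ᶠ[nhds (0:ℝ)] fun μ => -deriv Φ (-μ) := by
      refine heven'.deriv.trans ?_
      exact Filter.EventuallyEq.of_eq (funext fun μ => deriv_comp_neg Φ μ)
    have E2 : deriv (deriv Φ) =ᶠ[nhds (0:ℝ)] fun μ => deriv (deriv Φ) (-μ) := by
      refine E1.deriv.trans ?_
      refine Filter.EventuallyEq.of_eq (funext fun μ => ?_)
      rw [deriv.fun_neg, deriv_comp_neg, neg_neg]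
    have h := E2.deriv.eq_of_nhds
    rw [deriv_comp_neg (deriv (deriv Φ)) 0, neg_zero] at h
    linarith
  have hval := (hDΦ2 0 hε0).deriv
  rw [e3, show deriv Φ2 0 = _ from hval] at hodd
  norm_num [Real.one_rpow, hk00] at hodd
  linear_combination hodd

end Aux

set_option maxHeartbeats 1000000 in
/-- spherical case: the third-order coefficient in `μ` of the dual billiard
symmetry identity yields, at a zero of `g`, the stated third-order PDE. -/
theorem stmt5 (U : Set (ℝ × ℝ)) (hU : IsOpen U) (g : ℝ → ℝ → ℝ)
    (hg : ContDiffOn ℝ (⊤ : ℕ∞) (fun q : ℝ × ℝ => g q.1 q.2) U)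
    (p x y : ℝ) (hxy : (x, y) ∈ U) (hg0 : g x y = 0)
    (A B C : ℝ)
    (hA : A = x * py g x y - y * px g x y)
    (hB : B = (x * y) * px g x y + (1 + y ^ 2) * py g x y)
    (hC : C = (1 + x ^ 2) * px g x y + (x * y) * py g x y)
    (hsym : ∀ᶠ μ in nhds (0 : ℝ),
      (1 - μ * A) ^ p * g ((x + μ * B) / (1 - μ * A)) ((y - μ * C) / (1 - μ * A))
        = (1 + μ * A) ^ p * g ((x - μ * B) / (1 + μ * A)) ((y + μ * C) / (1 + μ * A))) :
    (1 + x ^ 2 + y ^ 2) *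
        (px (px (px g)) x y * (py g x y) ^ 3
          - 3 * py (px (px g)) x y * (py g x y) ^ 2 * px g x y
          + 3 * py (py (px g)) x y * py g x y * (px g x y) ^ 2
          - py (py (py g)) x y * (px g x y) ^ 3)
      + 3 * (2 - p) *
          (px (px g) x y * (py g x y) ^ 2
            - 2 * py (px g) x y * px g x y * py g x y
            + py (py g) x y * (px g x y) ^ 2) *
          (x * py g x y - y * px g x y) = 0 := by
  -- smoothness bookkeeping
  have hsm0 : ContDiffOn ℝ (⊤ : ℕ∞) (fun q : ℝ × ℝ => g q.1 q.2) U := hg.of_le (by simp)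
  obtain ⟨β, hβ⟩ : ∃ β : ℝ, β = B + x * A := ⟨_, rfl⟩
  obtain ⟨γ, hγ⟩ : ∃ γ : ℝ, γ = C - y * A := ⟨_, rfl⟩
  have hβval : β = (1 + x ^ 2 + y ^ 2) * py g x y := by rw [hβ, hB, hA]; ring
  have hγval : γ = (1 + x ^ 2 + y ^ 2) * px g x y := by rw [hγ, hC, hA]; ring
  have hsm0x := smooth_px hU hsm0
  have hsm0y := smooth_py hU hsm0
  have hsm1 : ContDiffOn ℝ (⊤ : ℕ∞) (fun q : ℝ × ℝ => Dop β γ g q.1 q.2) U :=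
    (contDiffOn_const.mul hsm0x).sub (contDiffOn_const.mul hsm0y)
  have hsm1x := smooth_px hU hsm1
  have hsm1y := smooth_py hU hsm1
  have hsm2 : ContDiffOn ℝ (⊤ : ℕ∞) (fun q : ℝ × ℝ => Dop β γ (Dop β γ g) q.1 q.2) U :=
    (contDiffOn_const.mul hsm1x).sub (contDiffOn_const.mul hsm1y)
  have hsmxx := smooth_px hU hsm0x
  have hsmxy := smooth_py hU hsm0x
  have hsmyx := smooth_px hU hsm0y
  have hsmyy := smooth_py hU hsm0y
  -- clairaut on U
  have E1U : ∀ q ∈ U, px (py g) q.1 q.2 = py (px g) q.1 q.2 := by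
    intro q hq; obtain ⟨a, b⟩ := q; exact clairaut hU hsm0 hq
  -- geometric setup : a ball inside U and a line parameter bound
  obtain ⟨ε1, hε1pos, hball1⟩ := Metric.isOpen_iff.1 hU (x, y) hxy
  set c : ℝ := |β| + |γ| + 1 with hc
  have hcpos : 0 < c := by positivity
  have hline_mem : ∀ t : ℝ, |t| < ε1 / c → ((x + t * β, y - t * γ) : ℝ × ℝ) ∈ U := by
    intro t ht
    apply hball1
    rw [Metric.mem_ball, Prod.dist_eq]
    have h1 : dist (x + t * β) x = |t| * |β| := by
      rw [Real.dist_eq]; rw [show x + t * β - x = t * β by ring, abs_mul]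
    have h2 : dist (y - t * γ) y = |t| * |γ| := by
      rw [Real.dist_eq]; rw [show y - t * γ - y = -(t * γ) by ring, abs_neg, abs_mul]
    have htc : |t| * c < ε1 := by
      calc |t| * c < (ε1 / c) * c := mul_lt_mul_of_pos_right ht hcpos
        _ = ε1 := by field_simp
    apply max_lt
    · rw [h1]; nlinarith [abs_nonneg t, abs_nonneg β, abs_nonneg γ]
    · rw [h2]; nlinarith [abs_nonneg t, abs_nonneg β, abs_nonneg γ]
  -- choose ε
  obtain ⟨ε2, hε2pos, hsymP⟩ := Metric.eventually_nhds_iff.1 hsym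
  set ε : ℝ := min (min (ε1 / c / 2) (1 / (2 * (|A| + 1)))) ε2 with hεdef
  have hεpos : 0 < ε := by
    apply lt_min (lt_min (by positivity) (by positivity)) hε2pos
  have hRgt : ∀ μ : ℝ, |μ| < ε → (2:ℝ)⁻¹ < 1 - μ * A := by
    intro μ hμ
    have h1 : |μ| < 1 / (2 * (|A| + 1)) :=
      lt_of_lt_of_le hμ ((min_le_left _ _).trans (min_le_right _ _))
    have hA1 : (0:ℝ) < |A| + 1 := by positivity
    have h2 : |μ * A| ≤ |μ| * (|A| + 1) := by
      rw [abs_mul]; nlinarith [abs_nonneg μ, abs_nonneg A]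
    have h3 : |μ| * (|A| + 1) < 2⁻¹ := by
      calc |μ| * (|A| + 1) < (1 / (2 * (|A| + 1))) * (|A| + 1) :=
            mul_lt_mul_of_pos_right h1 hA1
        _ = 2⁻¹ := by field_simp
    nlinarith [neg_abs_le (μ * A), le_abs_self (μ * A)]
  have hRpos : ∀ μ : ℝ, |μ| < ε → (0:ℝ) < 1 - μ * A := fun μ hμ =>
    lt_trans (by norm_num) (hRgt μ hμ)
  have hsmem : ∀ μ : ℝ, |μ| < ε →
      ((x + μ / (1 - μ * A) * β, y - μ / (1 - μ * A) * γ) : ℝ × ℝ) ∈ U := by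
    intro μ hμ
    apply hline_mem
    have hR2 := hRgt μ hμ
    have hR0 := hRpos μ hμ
    have hμ1 : |μ| < ε1 / c / 2 :=
      lt_of_lt_of_le hμ ((min_le_left _ _).trans (min_le_left _ _))
    rw [abs_div, abs_of_pos hR0]
    have hd : |μ| / (1 - μ * A) ≤ |μ| * 2 := by
      rw [div_le_iff₀ hR0]; nlinarith [abs_nonneg μ]
    have h2 : |μ| * 2 < ε1 / c := by
      have hc2 : 0 < ε1 / c := by positivity
      nlinarith
    linarith
  have hsd : ∀ μ : ℝ, |μ| < ε →
      HasDerivAt (fun μ : ℝ => μ / (1 - μ * A)) (((1 - μ * A) ^ 2)⁻¹) μ := by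
    intro μ hμ
    have hRd : HasDerivAt (fun μ : ℝ => 1 - μ * A) (-A) μ := by
      simpa using ((hasDerivAt_id μ).mul_const A).const_sub 1
    have := (hasDerivAt_id μ).div hRd (hRpos μ hμ).ne'
    refine this.congr_deriv ?_
    have h0 := (hRpos μ hμ).ne'
    field_simp
    simp only [id]; ring
  set k0 : ℝ → ℝ := fun μ => g (x + μ / (1 - μ * A) * β) (y - μ / (1 - μ * A) * γ) with hk0
  set k1 : ℝ → ℝ :=
    fun μ => Dop β γ g (x + μ / (1 - μ * A) * β) (y - μ / (1 - μ * A) * γ) with hk1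
  set k2 : ℝ → ℝ :=
    fun μ => Dop β γ (Dop β γ g) (x + μ / (1 - μ * A) * β) (y - μ / (1 - μ * A) * γ) with hk2
  set k3 : ℝ → ℝ :=
    fun μ => Dop β γ (Dop β γ (Dop β γ g))
      (x + μ / (1 - μ * A) * β) (y - μ / (1 - μ * A) * γ) with hk3
  have hd0 : ∀ μ : ℝ, |μ| < ε → HasDerivAt k0 (k1 μ * ((1 - μ * A) ^ 2)⁻¹) μ := by
    intro μ hμ
    rw [hk0, hk1]
    exact (line_hasDerivAt hU hsm0 x y β γ (hsmem μ hμ)).comp μ (hsd μ hμ)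
  have hd1 : ∀ μ : ℝ, |μ| < ε → HasDerivAt k1 (k2 μ * ((1 - μ * A) ^ 2)⁻¹) μ := by
    intro μ hμ
    rw [hk1, hk2]
    exact (line_hasDerivAt hU hsm1 x y β γ (hsmem μ hμ)).comp μ (hsd μ hμ)
  have hd2 : ∀ μ : ℝ, |μ| < ε → HasDerivAt k2 (k3 μ * ((1 - μ * A) ^ 2)⁻¹) μ := by
    intro μ hμ
    rw [hk2, hk3]
    exact (line_hasDerivAt hU hsm2 x y β γ (hsmem μ hμ)).comp μ (hsd μ hμ)
  have hk00 : k0 0 = 0 := by rw [hk0]; norm_num [hg0]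
  have heven : ∀ᶠ μ in nhds (0:ℝ), (1 - μ * A) ^ p * k0 μ = (1 + μ * A) ^ p * k0 (-μ) := by
    filter_upwards [Metric.ball_mem_nhds (0:ℝ) hεpos] with μ hμ'
    have hμ : |μ| < ε := by simpa [Real.norm_eq_abs] using mem_ball_zero_iff.1 hμ'
    have hμn : |(-μ)| < ε := by simpa [abs_neg] using hμ
    have hR : (1:ℝ) - μ * A ≠ 0 := (hRpos μ hμ).ne'
    have hRn : (1:ℝ) + μ * A ≠ 0 := by
      have h5 := hRpos (-μ) hμn
      rw [show (1:ℝ) - -μ * A = 1 + μ * A by ring] at h5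
      exact h5.ne'
    have e1 : x + μ / (1 - μ * A) * β = (x + μ * B) / (1 - μ * A) := by
      rw [hβ]; field_simp; ring
    have e2 : y - μ / (1 - μ * A) * γ = (y - μ * C) / (1 - μ * A) := by
      rw [hγ]; field_simp; ring
    have e3 : x + -μ / (1 - -μ * A) * β = (x - μ * B) / (1 + μ * A) := by
      rw [hβ, show (1:ℝ) - -μ * A = 1 + μ * A by ring]; field_simp; ring
    have e4 : y - -μ / (1 - -μ * A) * γ = (y + μ * C) / (1 + μ * A) := by
      rw [hγ, show (1:ℝ) - -μ * A = 1 + μ * A by ring]; field_simp; ring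
    have hdist : dist μ (0:ℝ) < ε2 := by
      rw [Real.dist_eq, sub_zero]; exact lt_of_lt_of_le hμ (min_le_right _ _)
    calc (1 - μ * A) ^ p * k0 μ
        = (1 - μ * A) ^ p * g ((x + μ * B) / (1 - μ * A)) ((y - μ * C) / (1 - μ * A)) := by
          rw [hk0]; simp only; rw [e1, e2]
      _ = (1 + μ * A) ^ p * g ((x - μ * B) / (1 + μ * A)) ((y + μ * C) / (1 + μ * A)) :=
          hsymP hdist
      _ = (1 + μ * A) ^ p * k0 (-μ) := by
          rw [hk0]; simp only; rw [e3, e4]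
  have hfin := mu_third A p k0 k1 k2 k3 ε hεpos hRpos hd0 hd1 hd2 hk00 heven
  -- evaluate the curve data at 0
  have hk10 : k1 0 = β * px g x y - γ * py g x y := by
    rw [hk1]; norm_num [Dop]
  have hk20 : k2 0 = β ^ 2 * px (px g) x y - 2 * β * γ * py (px g) x y
      + γ ^ 2 * py (py g) x y := by
    have h00 : k2 0 = Dop β γ (Dop β γ g) x y := by rw [hk2]; norm_num
    rw [h00]
    show β * px (Dop β γ g) x y - γ * py (Dop β γ g) x y = _
    rw [px_Dop hU hsm0x hsm0y β γ hxy, py_Dop hU hsm0x hsm0y β γ hxy,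
      clairaut hU hsm0 hxy]
    ring
  have heq1 : ∀ q ∈ U, px (Dop β γ g) q.1 q.2 = Dop β γ (px g) q.1 q.2 := by
    intro q hq; obtain ⟨a, b⟩ := q
    rw [px_Dop hU hsm0x hsm0y β γ hq, clairaut hU hsm0 hq]; rfl
  have heq2 : ∀ q ∈ U, py (Dop β γ g) q.1 q.2 = Dop β γ (py g) q.1 q.2 := by
    intro q hq; obtain ⟨a, b⟩ := q
    rw [py_Dop hU hsm0x hsm0y β γ hq]
    show _ = β * px (py g) a b - γ * py (py g) a b
    rw [clairaut hU hsm0 hq]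
  have hk30 : k3 0 = β ^ 3 * px (px (px g)) x y - 3 * β ^ 2 * γ * py (px (px g)) x y
      + 3 * β * γ ^ 2 * py (py (px g)) x y - γ ^ 3 * py (py (py g)) x y := by
    have h00 : k3 0 = Dop β γ (Dop β γ (Dop β γ g)) x y := by rw [hk3]; norm_num
    rw [h00]
    show β * px (Dop β γ (Dop β γ g)) x y - γ * py (Dop β γ (Dop β γ g)) x y = _
    rw [px_Dop hU hsm1x hsm1y β γ hxy, py_Dop hU hsm1x hsm1y β γ hxy,
      px_congr hU heq1 hxy, px_congr hU heq2 hxy,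
      py_congr hU heq1 hxy, py_congr hU heq2 hxy,
      px_Dop hU hsmxx hsmxy β γ hxy, px_Dop hU hsmyx hsmyy β γ hxy,
      py_Dop hU hsmxx hsmxy β γ hxy, py_Dop hU hsmyx hsmyy β γ hxy,
      px_congr hU E1U hxy,
      clairaut hU hsm0x hxy,
      clairaut hU hsm0y hxy,
      py_congr hU E1U hxy]
    ring
  rw [hk10, hk20, hk30, hβval, hγval, hA] at hfin
  have hSne : ((1:ℝ) + x ^ 2 + y ^ 2) ^ 2 ≠ 0 := by positivity
  have hkey : ((1:ℝ) + x ^ 2 + y ^ 2) ^ 2 *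
      ((1 + x ^ 2 + y ^ 2) *
        (px (px (px g)) x y * (py g x y) ^ 3
          - 3 * py (px (px g)) x y * (py g x y) ^ 2 * px g x y
          + 3 * py (py (px g)) x y * py g x y * (px g x y) ^ 2
          - py (py (py g)) x y * (px g x y) ^ 3)
      + 3 * (2 - p) *
          (px (px g) x y * (py g x y) ^ 2
            - 2 * py (px g) x y * px g x y * py g x y
            + py (py g) x y * (px g x y) ^ 2) *
          (x * py g x y - y * px g x y)) = 0 := by linear_combination hfin
  rcases mul_eq_zero.1 hkey with h | h
  · exact absurd h hSne
  · exact h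
end

section
/- Let U ⊆ ℝ² be open and f, r : U → ℝ be C² functions. Define H(g) = g_xx·g_y² − 2·g_xy·g_x·g_y + g_yy·g_x² for a C² function g. Then at every point (x,y) ∈ U with f(x,y) = 0 one has H(f·r)(x,y) = r(x,y)³ · H(f)(x,y). -/
/-- `H(g) = g_xx·g_y² − 2·g_xy·g_x·g_y + g_yy·g_x²`. -/
noncomputable def Hfun (g : ℝ → ℝ → ℝ) : ℝ → ℝ → ℝ := fun x y =>
  px (px g) x y * (py g x y) ^ 2 - 2 * py (px g) x y * px g x y * py g x y
    + py (py g) x y * (px g x y) ^ 2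

open Function Filter Topology

section FirstVariable

variable {g h : ℝ → ℝ → ℝ} {x y : ℝ}

theorem DifferentiableAt.uncurry_left (hg : DifferentiableAt ℝ (uncurry g) (x, y)) :
    DifferentiableAt ℝ (fun t => g t y) x :=
  hg.comp (f := fun t : ℝ => (t, y)) x (by fun_prop)

theorem px_eq_fderiv (hg : DifferentiableAt ℝ (uncurry g) (x, y)) :
    px g x y = fderiv ℝ (uncurry g) (x, y) (1, 0) :=
  (hg.hasFDerivAt.comp_hasDerivAt (x := x) (f := fun t => (t, y))
    ((hasDerivAt_id x).prodMk (hasDerivAt_const x y))).deriv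

theorem px_congr_s8 {g' : ℝ → ℝ → ℝ} (hgg' : uncurry g =ᶠ[𝓝 (x, y)] uncurry g') :
    px g x y = px g' x y :=
  EventuallyEq.deriv_eq <| hgg'.comp_tendsto <|
    (continuous_id.prodMk continuous_const).tendsto' x (x, y) rfl

theorem px_add (hg : DifferentiableAt ℝ (uncurry g) (x, y))
    (hh : DifferentiableAt ℝ (uncurry h) (x, y)) :
    px (fun a b => g a b + h a b) x y = px g x y + px h x y :=
  deriv_add hg.uncurry_left hh.uncurry_left

theorem px_mul (hg : DifferentiableAt ℝ (uncurry g) (x, y))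
    (hh : DifferentiableAt ℝ (uncurry h) (x, y)) :
    px (fun a b => g a b * h a b) x y = px g x y * h x y + g x y * px h x y :=
  deriv_mul hg.uncurry_left hh.uncurry_left

theorem ContDiffAt.uncurry_px {n : ℕ} (hg : ContDiffAt ℝ (n + 1) (uncurry g) (x, y)) :
    ContDiffAt ℝ n (uncurry (px g)) (x, y) := by
  have hfd : ContDiffAt ℝ n (fun q => fderiv ℝ (uncurry g) q (1, 0)) (x, y) :=
    (hg.fderiv_right le_rfl).clm_apply contDiffAt_const
  refine hfd.congr_of_eventuallyEq ?_
  filter_upwards [hg.eventually (by simp)] with q hq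
  exact px_eq_fderiv (hq.differentiableAt (by simp))

end FirstVariable

section SecondVariable

/- `py g x y` is definitionally `px (flip g) y x`, so each fact about `py` below is the
corresponding fact about `px`, applied to `flip g`. -/

variable {g h : ℝ → ℝ → ℝ} {x y : ℝ}

theorem DifferentiableAt.uncurry_flip (hg : DifferentiableAt ℝ (uncurry g) (x, y)) :
    DifferentiableAt ℝ (uncurry (flip g)) (y, x) :=
  hg.comp (f := fun q : ℝ × ℝ => (q.2, q.1)) (y, x) (by fun_prop)

theorem ContDiffAt.uncurry_flip {n : WithTop ℕ∞} (hg : ContDiffAt ℝ n (uncurry g) (x, y)) :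
    ContDiffAt ℝ n (uncurry (flip g)) (y, x) :=
  hg.comp (f := fun q : ℝ × ℝ => (q.2, q.1)) (y, x) (by fun_prop)

theorem py_congr_s8 {g' : ℝ → ℝ → ℝ} (hgg' : uncurry g =ᶠ[𝓝 (x, y)] uncurry g') :
    py g x y = py g' x y :=
  px_congr_s8 (g := flip g) (g' := flip g') (hgg'.comp_tendsto (continuous_swap.tendsto (y, x)))

theorem py_add (hg : DifferentiableAt ℝ (uncurry g) (x, y))
    (hh : DifferentiableAt ℝ (uncurry h) (x, y)) :
    py (fun a b => g a b + h a b) x y = py g x y + py h x y :=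
  px_add hg.uncurry_flip hh.uncurry_flip

theorem py_mul (hg : DifferentiableAt ℝ (uncurry g) (x, y))
    (hh : DifferentiableAt ℝ (uncurry h) (x, y)) :
    py (fun a b => g a b * h a b) x y = py g x y * h x y + g x y * py h x y :=
  px_mul hg.uncurry_flip hh.uncurry_flip

theorem ContDiffAt.uncurry_py {n : ℕ} (hg : ContDiffAt ℝ (n + 1) (uncurry g) (x, y)) :
    ContDiffAt ℝ n (uncurry (py g)) (x, y) :=
  hg.uncurry_flip.uncurry_px.uncurry_flip

end SecondVariable

section Leibniz

variable {g h : ℝ → ℝ → ℝ} {x y : ℝ}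

theorem DifferentiableAt.uncurry_mul (hg : DifferentiableAt ℝ (uncurry g) (x, y))
    (hh : DifferentiableAt ℝ (uncurry h) (x, y)) :
    DifferentiableAt ℝ (uncurry fun a b => g a b * h a b) (x, y) :=
  hg.mul hh

theorem px_mul_eventuallyEq (hg : ContDiffAt ℝ 1 (uncurry g) (x, y))
    (hh : ContDiffAt ℝ 1 (uncurry h) (x, y)) :
    uncurry (px fun a b => g a b * h a b) =ᶠ[𝓝 (x, y)]
      uncurry fun a b => px g a b * h a b + g a b * px h a b := by
  filter_upwards [hg.eventually (by simp), hh.eventually (by simp)] with q hgq hhq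
  exact px_mul (hgq.differentiableAt one_ne_zero) (hhq.differentiableAt one_ne_zero)

theorem px_px_mul (hg : ContDiffAt ℝ 2 (uncurry g) (x, y))
    (hh : ContDiffAt ℝ 2 (uncurry h) (x, y)) :
    px (px fun a b => g a b * h a b) x y =
      px (px g) x y * h x y + 2 * px g x y * px h x y + g x y * px (px h) x y := by
  have hgd := hg.differentiableAt two_ne_zero
  have hhd := hh.differentiableAt two_ne_zero
  have hgx := (hg.uncurry_px (n := 1)).differentiableAt one_ne_zero
  have hhx := (hh.uncurry_px (n := 1)).differentiableAt one_ne_zero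
  rw [px_congr_s8 (px_mul_eventuallyEq (hg.of_le one_le_two) (hh.of_le one_le_two)),
    px_add (hgx.uncurry_mul hhd) (hgd.uncurry_mul hhx), px_mul hgx hhd, px_mul hgd hhx]
  ring

theorem py_px_mul (hg : ContDiffAt ℝ 2 (uncurry g) (x, y))
    (hh : ContDiffAt ℝ 2 (uncurry h) (x, y)) :
    py (px fun a b => g a b * h a b) x y =
      py (px g) x y * h x y + px g x y * py h x y + py g x y * px h x y
        + g x y * py (px h) x y := by
  have hgd := hg.differentiableAt two_ne_zero
  have hhd := hh.differentiableAt two_ne_zero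
  have hgx := (hg.uncurry_px (n := 1)).differentiableAt one_ne_zero
  have hhx := (hh.uncurry_px (n := 1)).differentiableAt one_ne_zero
  rw [py_congr_s8 (px_mul_eventuallyEq (hg.of_le one_le_two) (hh.of_le one_le_two)),
    py_add (hgx.uncurry_mul hhd) (hgd.uncurry_mul hhx), py_mul hgx hhd, py_mul hgd hhx]
  ring

theorem py_py_mul (hg : ContDiffAt ℝ 2 (uncurry g) (x, y))
    (hh : ContDiffAt ℝ 2 (uncurry h) (x, y)) :
    py (py fun a b => g a b * h a b) x y =
      py (py g) x y * h x y + 2 * py g x y * py h x y + g x y * py (py h) x y :=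
  px_px_mul hg.uncurry_flip hh.uncurry_flip

end Leibniz

/-- for `C²` functions `f, r` on an open `U ⊆ ℝ²`, at every point of `U` where
`f` vanishes one has `H(f·r) = r³·H(f)`. -/
theorem stmt8 (U : Set (ℝ × ℝ)) (hU : IsOpen U) (f r : ℝ → ℝ → ℝ)
    (hf : ContDiffOn ℝ 2 (fun q : ℝ × ℝ => f q.1 q.2) U)
    (hr : ContDiffOn ℝ 2 (fun q : ℝ × ℝ => r q.1 q.2) U) :
    ∀ x y : ℝ, (x, y) ∈ U → f x y = 0 →
      Hfun (fun x' y' => f x' y' * r x' y') x y = (r x y) ^ 3 * Hfun f x y := by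
  intro x y hxy hf0
  have hf₂ : ContDiffAt ℝ 2 (uncurry f) (x, y) := hf.contDiffAt (hU.mem_nhds hxy)
  have hr₂ : ContDiffAt ℝ 2 (uncurry r) (x, y) := hr.contDiffAt (hU.mem_nhds hxy)
  have hfd := hf₂.differentiableAt two_ne_zero
  have hrd := hr₂.differentiableAt two_ne_zero
  simp only [Hfun, px_px_mul hf₂ hr₂, py_px_mul hf₂ hr₂, py_py_mul hf₂ hr₂, px_mul hfd hrd,
    py_mul hfd hrd, hf0]
  ring
end

section
/- Let U ⊆ ℝ² be open, g : U → ℝ a C³ function, p ∈ ℝ, I an interval, and σ : I → U a C¹ curve such that for all t ∈ I: g(σ(t)) = 0 and ∇g(σ(t)) ≠ 0. Suppose that at every point (x,y) = σ(t): (1+x²+y²)·(g_y·∂_x(H(g)) − g_x·∂_y(H(g))) + 3·(2−p)·H(g)·(x·g_y − y·g_x) = 0, where H(g) = g_xx·g_y² − 2·g_xy·g_x·g_y + g_yy·g_x². Then the function t ↦ H(g)(σ(t))·(1+σ₁(t)²+σ₂(t)²)^{(6−3p)/2} is constant on I; equivalently, there is a constant c with H(g)(σ(t)) = c·(1+σ₁(t)²+σ₂(t)²)^{(3p−6)/2}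 for all t ∈ I. -/
/-!
Since `g ∘ σ = 0` and `∇g ≠ 0`, the velocity of `σ` is a multiple `λ • u` of the tangent field
`u = (g_y, -g_x)`. With `W = 1 + x² + y²` one has `u(W) = 2 (x g_y - y g_x)`, so the derivative of
`H(g) · W ^ k` along `σ` is `λ W ^ (k - 1) (W · u(H(g)) + 2k · H(g) · (x g_y - y g_x))`. For
`2k = 3 (2 - p)` this is `λ W ^ (k - 1)` times the left side of the hypothesis, hence zero, and
`H(g) · W ^ k` is constant on the convex set `I` by the mean value inequality.
-/

open Function

section Partials

theorem px_eq_fderiv_s9 {f : ℝ → ℝ → ℝ} {q : ℝ × ℝ} (hf : DifferentiableAt ℝ (uncurry f) q) :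
    px f q.1 q.2 = fderiv ℝ (uncurry f) q (1, 0) := by
  have hline : HasDerivAt (fun x : ℝ => (x, q.2)) ((1 : ℝ), (0 : ℝ)) q.1 :=
    (hasDerivAt_id q.1).prodMk (hasDerivAt_const q.1 q.2)
  exact (hf.hasFDerivAt.comp_hasDerivAt q.1 hline).deriv

theorem py_eq_fderiv {f : ℝ → ℝ → ℝ} {q : ℝ × ℝ} (hf : DifferentiableAt ℝ (uncurry f) q) :
    py f q.1 q.2 = fderiv ℝ (uncurry f) q (0, 1) := by
  have hline : HasDerivAt (fun y : ℝ => (q.1, y)) ((0 : ℝ), (1 : ℝ)) q.2 :=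
    (hasDerivAt_const q.2 q.1).prodMk (hasDerivAt_id q.2)
  exact (hf.hasFDerivAt.comp_hasDerivAt q.2 hline).deriv

variable {U : Set (ℝ × ℝ)} {n : WithTop ℕ∞}

theorem ContDiffOn.uncurry_px {f : ℝ → ℝ → ℝ} (hf : ContDiffOn ℝ (n + 1) (uncurry f) U)
    (hU : IsOpen U) : ContDiffOn ℝ n (uncurry (px f)) U :=
  ((hf.fderiv_of_isOpen hU le_rfl).clm_apply contDiffOn_const).congr fun q hq =>
    px_eq_fderiv_s9 ((hf.differentiableOn (by simp) q hq).differentiableAt (hU.mem_nhds hq))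

theorem ContDiffOn.uncurry_py {f : ℝ → ℝ → ℝ} (hf : ContDiffOn ℝ (n + 1) (uncurry f) U)
    (hU : IsOpen U) : ContDiffOn ℝ n (uncurry (py f)) U :=
  ((hf.fderiv_of_isOpen hU le_rfl).clm_apply contDiffOn_const).congr fun q hq =>
    py_eq_fderiv ((hf.differentiableOn (by simp) q hq).differentiableAt (hU.mem_nhds hq))

theorem ContDiffOn.uncurry_Hfun {g : ℝ → ℝ → ℝ} (hg : ContDiffOn ℝ (n + 1 + 1) (uncurry g) U)
    (hU : IsOpen U) : ContDiffOn ℝ n (uncurry (Hfun g)) U := by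
  have hx := hg.uncurry_px hU
  have hy := hg.uncurry_py hU
  have hx' := hx.of_le le_self_add
  have hy' := hy.of_le le_self_add
  exact ((hx.uncurry_px hU).mul (hy'.pow 2)).sub
    (((contDiffOn_const.mul (hx.uncurry_py hU)).mul hx').mul hy') |>.add
    ((hy.uncurry_py hU).mul (hx'.pow 2))

end Partials

section Curve

variable {σ : ℝ → ℝ × ℝ} {v : ℝ × ℝ} {I : Set ℝ} {t : ℝ}

theorem HasDerivWithinAt.uncurry_comp {f : ℝ → ℝ → ℝ}
    (hf : DifferentiableAt ℝ (uncurry f) (σ t)) (hσ : HasDerivWithinAt σ v I t) :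
    HasDerivWithinAt (fun s => f (σ s).1 (σ s).2)
      (v.1 * px f (σ t).1 (σ t).2 + v.2 * py f (σ t).1 (σ t).2) I t := by
  have hv : v = v.1 • ((1 : ℝ), (0 : ℝ)) + v.2 • ((0 : ℝ), (1 : ℝ)) := by ext <;> simp
  have h := hf.hasFDerivAt.comp_hasDerivWithinAt t hσ
  rwa [hv, map_add, map_smul, map_smul, ← px_eq_fderiv_s9 hf, ← py_eq_fderiv hf] at h

theorem HasDerivWithinAt.mul_px_add_mul_py_eq_zero {f : ℝ → ℝ → ℝ}
    (hf : DifferentiableAt ℝ (uncurry f) (σ t)) (hσ : HasDerivWithinAt σ v I t)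
    (hI : UniqueDiffWithinAt ℝ I t) (ht : t ∈ I) (hf0 : ∀ s ∈ I, f (σ s).1 (σ s).2 = 0) :
    v.1 * px f (σ t).1 (σ t).2 + v.2 * py f (σ t).1 (σ t).2 = 0 :=
  hI.eq_deriv _ (hσ.uncurry_comp hf) ((hasDerivWithinAt_const t I 0).congr hf0 (hf0 t ht))

theorem HasDerivWithinAt.one_add_sq_add_sq_rpow (hσ : HasDerivWithinAt σ v I t) (k : ℝ) :
    HasDerivWithinAt (fun s => (1 + (σ s).1 ^ 2 + (σ s).2 ^ 2) ^ k)
      ((2 * (σ t).1 * v.1 + 2 * (σ t).2 * v.2) * k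
        * (1 + (σ t).1 ^ 2 + (σ t).2 ^ 2) ^ (k - 1)) I t := by
  have h₁ : HasDerivWithinAt (fun s => (σ s).1) v.1 I t :=
    (hasFDerivAt_fst (p := σ t)).comp_hasDerivWithinAt t hσ
  have h₂ : HasDerivWithinAt (fun s => (σ s).2) v.2 I t :=
    (hasFDerivAt_snd (p := σ t)).comp_hasDerivWithinAt t hσ
  refine ((((hasDerivWithinAt_const t I 1).fun_add (h₁.fun_pow 2)).fun_add (h₂.fun_pow 2)).rpow_const
    (Or.inl (by positivity))).congr_deriv ?_
  push_cast
  ring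

end Curve

theorem exists_eq_mul_of_mul_add_mul_eq_zero {a b v₁ v₂ : ℝ} (hab : (a, b) ≠ (0, 0))
    (h : v₁ * a + v₂ * b = 0) : ∃ c, v₁ = c * b ∧ v₂ = -(c * a) := by
  have hne : a ^ 2 + b ^ 2 ≠ 0 := by
    contrapose! hab
    have ha : a = 0 := by nlinarith [sq_nonneg a, sq_nonneg b]
    have hb : b = 0 := by nlinarith [sq_nonneg a, sq_nonneg b]
    simp [ha, hb]
  refine ⟨(v₁ * b - v₂ * a) / (a ^ 2 + b ^ 2), ?_, ?_⟩ <;> field_simp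
  · linear_combination a * h
  · linear_combination b * h

theorem hasDerivWithinAt_mul_rpow_eq_zero {g F : ℝ → ℝ → ℝ} {σ : ℝ → ℝ × ℝ} {v : ℝ × ℝ}
    {I : Set ℝ} {t k : ℝ} (hg : DifferentiableAt ℝ (uncurry g) (σ t))
    (hF : DifferentiableAt ℝ (uncurry F) (σ t)) (hσ : HasDerivWithinAt σ v I t)
    (hI : UniqueDiffWithinAt ℝ I t) (ht : t ∈ I) (hg0 : ∀ s ∈ I, g (σ s).1 (σ s).2 = 0)
    (hgrad : (px g (σ t).1 (σ t).2, py g (σ t).1 (σ t).2) ≠ (0, 0))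
    (hpde : (1 + (σ t).1 ^ 2 + (σ t).2 ^ 2) *
          (py g (σ t).1 (σ t).2 * px F (σ t).1 (σ t).2
            - px g (σ t).1 (σ t).2 * py F (σ t).1 (σ t).2)
        + 2 * k * F (σ t).1 (σ t).2 *
            ((σ t).1 * py g (σ t).1 (σ t).2 - (σ t).2 * px g (σ t).1 (σ t).2) = 0) :
    HasDerivWithinAt (fun s => F (σ s).1 (σ s).2 * (1 + (σ s).1 ^ 2 + (σ s).2 ^ 2) ^ k) 0 I t := by
  obtain ⟨c, hv₁, hv₂⟩ :=
    exists_eq_mul_of_mul_add_mul_eq_zero hgrad (hσ.mul_px_add_mul_py_eq_zero hg hI ht hg0)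
  have hW : (1 + (σ t).1 ^ 2 + (σ t).2 ^ 2) ^ k
      = (1 + (σ t).1 ^ 2 + (σ t).2 ^ 2) ^ (k - 1) * (1 + (σ t).1 ^ 2 + (σ t).2 ^ 2) := by
    rw [← Real.rpow_add_one (by positivity), sub_add_cancel]
  refine ((hσ.uncurry_comp hF).mul (hσ.one_add_sq_add_sq_rpow k)).congr_deriv ?_
  rw [hW, hv₁, hv₂]
  linear_combination c * (1 + (σ t).1 ^ 2 + (σ t).2 ^ 2) ^ (k - 1) * hpde

theorem Set.Subsingleton.hasDerivWithinAt_zero {I : Set ℝ} {t : ℝ} (hI : I.Subsingleton)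
    (ht : t ∈ I) (F : ℝ → ℝ) : HasDerivWithinAt F 0 I t :=
  hI.eq_singleton_of_mem ht ▸ (hasFDerivWithinAt_singleton F t).hasDerivWithinAt

theorem Convex.exists_forall_eq_of_hasDerivWithinAt_zero {I : Set ℝ} (hI : Convex ℝ I)
    {F : ℝ → ℝ} (hF : ∀ t ∈ I, HasDerivWithinAt F 0 I t) : ∃ c, ∀ t ∈ I, F t = c := by
  rcases I.eq_empty_or_nonempty with rfl | ⟨a, ha⟩
  · exact ⟨0, by simp⟩
  refine ⟨F a, fun t ht => ?_⟩
  simpa [sub_eq_zero] using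
    hI.norm_image_sub_le_of_norm_hasDerivWithin_le (C := 0) hF (fun _ _ => by simp) ha ht

theorem eq_mul_rpow_neg_of_mul_rpow_eq {a w c k : ℝ} (hw : 0 < w) (h : a * w ^ k = c) :
    a = c * w ^ (-k) := by
  rw [← h, mul_assoc, ← Real.rpow_add hw, add_neg_cancel, Real.rpow_zero, mul_one]

/-- spherical case: if along a `C¹` curve `σ` in the zero set of `g` (with
nonvanishing gradient) the identity
`(1+x²+y²)·L_u(H(g)) + 3(2−p)·H(g)·(x·g_y − y·g_x) = 0` holds, then
`H(g) = c·(1+x²+y²)^{(3p−6)/2}` along `σ` for some constant `c`. -/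
theorem stmt9 (U : Set (ℝ × ℝ)) (hU : IsOpen U) (g : ℝ → ℝ → ℝ)
    (hg : ContDiffOn ℝ 3 (fun q : ℝ × ℝ => g q.1 q.2) U)
    (p : ℝ) (I : Set ℝ) (hI : Convex ℝ I)
    (σ : ℝ → ℝ × ℝ) (hσ : ContDiffOn ℝ 1 σ I)
    (hmem : ∀ t ∈ I, σ t ∈ U)
    (hg0 : ∀ t ∈ I, g (σ t).1 (σ t).2 = 0)
    (hgrad : ∀ t ∈ I, (px g (σ t).1 (σ t).2, py g (σ t).1 (σ t).2) ≠ (0, 0))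
    (hpde : ∀ t ∈ I,
      (1 + (σ t).1 ^ 2 + (σ t).2 ^ 2) *
          (py g (σ t).1 (σ t).2 * px (Hfun g) (σ t).1 (σ t).2
            - px g (σ t).1 (σ t).2 * py (Hfun g) (σ t).1 (σ t).2)
        + 3 * (2 - p) * Hfun g (σ t).1 (σ t).2 *
            ((σ t).1 * py g (σ t).1 (σ t).2 - (σ t).2 * px g (σ t).1 (σ t).2) = 0) :
    (∃ c : ℝ, ∀ t ∈ I,
        Hfun g (σ t).1 (σ t).2 * (1 + (σ t).1 ^ 2 + (σ t).2 ^ 2) ^ ((6 - 3 * p) / 2) = c) ∧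
    (∃ c : ℝ, ∀ t ∈ I,
        Hfun g (σ t).1 (σ t).2 = c * (1 + (σ t).1 ^ 2 + (σ t).2 ^ 2) ^ ((3 * p - 6) / 2)) := by
  have hHfun : ContDiffOn ℝ 1 (uncurry (Hfun g)) U := ContDiffOn.uncurry_Hfun hg hU
  have hdiff {f : ℝ → ℝ → ℝ} (hf : ContDiffOn ℝ 1 (uncurry f) U) {t : ℝ} (ht : t ∈ I) :
      DifferentiableAt ℝ (uncurry f) (σ t) :=
    (hf.differentiableOn one_ne_zero _ (hmem t ht)).differentiableAt (hU.mem_nhds (hmem t ht))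
  have hderiv : ∀ t ∈ I, HasDerivWithinAt
      (fun s => Hfun g (σ s).1 (σ s).2 * (1 + (σ s).1 ^ 2 + (σ s).2 ^ 2) ^ ((6 - 3 * p) / 2))
      0 I t := by
    rcases I.subsingleton_or_nontrivial with hI₁ | hI₁
    · exact fun t ht => hI₁.hasDerivWithinAt_zero ht _
    have hud := uniqueDiffOn_convex hI (hI.nontrivial_iff_nonempty_interior.1 hI₁)
    exact fun t ht => hasDerivWithinAt_mul_rpow_eq_zero (hdiff (hg.of_le (by norm_num)) ht)
      (hdiff hHfun ht) ((hσ.differentiableOn one_ne_zero t ht).hasDerivWithinAt) (hud t ht) ht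
      hg0 (hgrad t ht) (by linear_combination hpde t ht)
  obtain ⟨c, hc⟩ := hI.exists_forall_eq_of_hasDerivWithinAt_zero hderiv
  refine ⟨⟨c, hc⟩, c, fun t ht => ?_⟩
  rw [show (3 * p - 6) / 2 = -((6 - 3 * p) / 2) by ring]
  exact eq_mul_rpow_neg_of_mul_rpow_eq (by positivity) (hc t ht)
end

section
/- Let I be an open interval, γ : I → ℝ³ a C² curve with ‖γ(s)‖ = 1 and ‖γ'(s)‖ = 1 for all s ∈ I (a unit-speed curve on the unit sphere), and Ψ : ℝ³ → ℝ a homogeneous polynomial of degree n. Suppose that for every s ∈ I and every pair of unit vectors v₋, v₊ ∈ ℝ³ with ⟨v₋, γ(s)⟩ = ⟨v₊, γ(s)⟩ = 0 and ⟨v₊, γ'(s)⟩ = ⟨v₋, γ'(s)⟩, one has Ψ(γ(s) × v₋) = Ψ(γ(s) × v₊). Then the dual curve Γ = γ × γ' satisfies Ψ(Γ(s) − ε·Γ'(s)) = Ψ(Γ(s) + ε·Γ'(s)) for every s ∈ I and every ε ∈ ℝ. -/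
open MvPolynomial

/-- The standard cross product on `ℝ³`. -/
def cross3 (a b : Fin 3 → ℝ) : Fin 3 → ℝ :=
  ![a 1 * b 2 - a 2 * b 1, a 2 * b 0 - a 0 * b 2, a 0 * b 1 - a 1 * b 0]

/-- The standard Euclidean inner product on `ℝ³`. -/
def dot3 (a b : Fin 3 → ℝ) : ℝ := a 0 * b 0 + a 1 * b 1 + a 2 * b 2

/-!
Write `u = γ s`, `w = γ' s`, `g = γ'' s`. Constancy of `|γ|` and `|γ'|` gives `u ⊥ w` and
`w ⊥ g`, and `Γ' = u × g`, so `Γ' ⊥ Γ` and both are orthogonal to `u`. Hence `Γ ∓ εΓ'` are two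
momenta at `u` of the same length with the same component along `Γ = u × w`. Every momentum
`y ⊥ u` of length `r > 0` is `u × v` for the unit velocity `v = r⁻¹ • (y × u)`, whose component
along `w` is `r⁻¹ ⟨y, Γ⟩`; so the two velocities are related by the reflection law, and the
reflection invariance of `Ψ` together with homogeneity gives the claim.
-/

open Matrix Filter Topology

theorem cross3_eq_crossProduct (a b : Fin 3 → ℝ) : cross3 a b = a ⨯₃ b := rfl

theorem dot3_eq_dotProduct (a b : Fin 3 → ℝ) : dot3 a b = a ⬝ᵥ b := (vec3_dotProduct a b).symm

theorem MvPolynomial.IsHomogeneous.eval_smul {σ R : Type*} [CommSemiring R]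
    {φ : MvPolynomial σ R} {n : ℕ} (hφ : φ.IsHomogeneous n) (c : R) (x : σ → R) :
    eval (c • x) φ = c ^ n * eval x φ := by
  rw [eval_eq, eval_eq, Finset.mul_sum]
  refine Finset.sum_congr rfl fun d hd => ?_
  simp_rw [Pi.smul_apply, smul_eq_mul, mul_pow, Finset.prod_mul_distrib,
    Finset.prod_pow_eq_pow_sum, ← hφ.degree_eq_sum_deg_support hd]
  ring

section Derivatives

variable {𝕜 : Type*} [NontriviallyNormedField 𝕜] [CompleteSpace 𝕜] {t : 𝕜}

theorem HasDerivAt.crossProduct {f g : 𝕜 → Fin 3 → 𝕜} {f' g' : Fin 3 → 𝕜}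
    (hf : HasDerivAt f f' t) (hg : HasDerivAt g g' t) :
    HasDerivAt (fun x => f x ⨯₃ g x) (f t ⨯₃ g' + f' ⨯₃ g t) t :=
  (_root_.crossProduct (R := 𝕜)).toContinuousBilinearMap.hasDerivAt_of_bilinear
    (fun _ => hf) (fun _ => hg)

theorem HasDerivAt.dotProduct {ι : Type*} [Fintype ι] {f g : 𝕜 → ι → 𝕜} {f' g' : ι → 𝕜}
    (hf : HasDerivAt f f' t) (hg : HasDerivAt g g' t) :
    HasDerivAt (fun x => f x ⬝ᵥ g x) (f t ⬝ᵥ g' + f' ⬝ᵥ g t) t :=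
  (dotProductBilin 𝕜 𝕜 : (ι → 𝕜) →ₗ[𝕜] (ι → 𝕜) →ₗ[𝕜] 𝕜).toContinuousBilinearMap
    |>.hasDerivAt_of_bilinear (fun _ => hf) (fun _ => hg)

theorem HasDerivAt.dotProduct_eq_zero_of_eventually_dotProduct_self_eq [CharZero 𝕜] {ι : Type*}
    [Fintype ι] {f : 𝕜 → ι → 𝕜} {f' : ι → 𝕜} {c : 𝕜} (hf : HasDerivAt f f' t)
    (hc : ∀ᶠ x in 𝓝 t, f x ⬝ᵥ f x = c) : f t ⬝ᵥ f' = 0 := by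
  have hconst : HasDerivAt (fun x => f x ⬝ᵥ f x) 0 t :=
    (hasDerivAt_const t c).congr_of_eventuallyEq hc
  have h2 : 2 * (f t ⬝ᵥ f') = 0 := by
    rw [two_mul, ← (hf.dotProduct hf).unique hconst, dotProduct_comm f' (f t)]
  simpa using h2

end Derivatives

def ReflectionInvariantAt (Ψ : MvPolynomial (Fin 3) ℝ) (u w : Fin 3 → ℝ) : Prop :=
  ∀ vm vp : Fin 3 → ℝ, vm ⬝ᵥ vm = 1 → vp ⬝ᵥ vp = 1 → vm ⬝ᵥ u = 0 → vp ⬝ᵥ u = 0 →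
    vp ⬝ᵥ w = vm ⬝ᵥ w → eval (u ⨯₃ vm) Ψ = eval (u ⨯₃ vp) Ψ

theorem ReflectionInvariantAt.eval_eq {Ψ : MvPolynomial (Fin 3) ℝ} {u w : Fin 3 → ℝ} {n : ℕ}
    (h : ReflectionInvariantAt Ψ u w) (hΨ : Ψ.IsHomogeneous n) (hu : u ⬝ᵥ u = 1)
    {ym yp : Fin 3 → ℝ} (hym : ym ⬝ᵥ u = 0) (hyp : yp ⬝ᵥ u = 0)
    (hnorm : ym ⬝ᵥ ym = yp ⬝ᵥ yp) (hcomp : ym ⬝ᵥ u ⨯₃ w = yp ⬝ᵥ u ⨯₃ w) :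
    eval ym Ψ = eval yp Ψ := by
  have hnonneg : 0 ≤ ym ⬝ᵥ ym := Finset.sum_nonneg fun i _ => mul_self_nonneg (ym i)
  rcases hnonneg.eq_or_lt with h0 | hpos
  · rw [(dotProduct_self_eq_zero (v := ym)).mp h0.symm,
      (dotProduct_self_eq_zero (v := yp)).mp (hnorm ▸ h0.symm)]
  obtain ⟨r, hr0, hr⟩ : ∃ r : ℝ, r ≠ 0 ∧ ym ⬝ᵥ ym = r ^ 2 :=
    ⟨√(ym ⬝ᵥ ym), (Real.sqrt_pos.mpr hpos).ne', (Real.sq_sqrt hpos.le).symm⟩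
  have hunit : ∀ y, y ⬝ᵥ u = 0 → y ⬝ᵥ y = r ^ 2 → r⁻¹ • y ⨯₃ u ⬝ᵥ r⁻¹ • y ⨯₃ u = 1 := by
    intro y hy hyy
    rw [smul_dotProduct, dotProduct_smul, cross_dot_cross, hu, hy, hyy, smul_eq_mul,
      smul_eq_mul]
    field_simp
    ring
  have horth : ∀ y, r⁻¹ • y ⨯₃ u ⬝ᵥ u = 0 := fun y => by
    rw [smul_dotProduct, dotProduct_comm, dot_cross_self, smul_zero]
  have htangent : ∀ y, r⁻¹ • y ⨯₃ u ⬝ᵥ w = r⁻¹ * (y ⬝ᵥ u ⨯₃ w) := fun y => by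
    rw [smul_dotProduct, dotProduct_comm, triple_product_permutation, smul_eq_mul]
  have hmomentum : ∀ y, y ⬝ᵥ u = 0 → u ⨯₃ (r⁻¹ • y ⨯₃ u) = r⁻¹ • y := fun y hy => by
    rw [map_smul, cross_cross_eq_smul_sub_smul', hu, hy, one_smul, zero_smul, sub_zero]
  have hrefl := h _ _ (hunit ym hym hr) (hunit yp hyp (hnorm ▸ hr)) (horth ym) (horth yp)
    (by rw [htangent, htangent, hcomp])
  rw [hmomentum ym hym, hmomentum yp hyp, hΨ.eval_smul, hΨ.eval_smul] at hrefl
  exact mul_left_cancel₀ (pow_ne_zero n (inv_ne_zero hr0)) hrefl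

theorem ReflectionInvariantAt.eval_sub_smul_eq_eval_add_smul {Ψ : MvPolynomial (Fin 3) ℝ}
    {u w g : Fin 3 → ℝ} {n : ℕ} (h : ReflectionInvariantAt Ψ u w) (hΨ : Ψ.IsHomogeneous n)
    (hu : u ⬝ᵥ u = 1) (huw : u ⬝ᵥ w = 0) (hwg : w ⬝ᵥ g = 0) (ε : ℝ) :
    eval (u ⨯₃ w - ε • u ⨯₃ g) Ψ = eval (u ⨯₃ w + ε • u ⨯₃ g) Ψ := by
  have hΓ : u ⨯₃ g ⬝ᵥ u ⨯₃ w = 0 := by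
    rw [cross_dot_cross, hu, huw, dotProduct_comm g w, hwg]
    ring
  have hcross_orth : ∀ x, u ⨯₃ x ⬝ᵥ u = 0 := fun x => by rw [dotProduct_comm, dot_self_cross]
  apply h.eval_eq hΨ hu
  · rw [sub_dotProduct, smul_dotProduct, hcross_orth, hcross_orth, smul_zero, sub_zero]
  · rw [add_dotProduct, smul_dotProduct, hcross_orth, hcross_orth, smul_zero, add_zero]
  · simp only [sub_dotProduct, add_dotProduct, dotProduct_sub, dotProduct_add, smul_dotProduct,
      dotProduct_smul, hΓ, dotProduct_comm (u ⨯₃ w) (u ⨯₃ g)]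
    ring
  · simp only [sub_dotProduct, add_dotProduct, smul_dotProduct, hΓ]
    ring

/-- spherical case: if a homogeneous polynomial `Ψ` of degree `n`, evaluated
on momenta `M = r × v`, is invariant under the Birkhoff billiard reflection law along a
unit-speed `C²` curve `γ` on the unit sphere, then `Ψ` satisfies the outer-billiard
symmetry identity `Ψ(Γ − εΓ') = Ψ(Γ + εΓ')` along the dual curve `Γ = γ × γ'`. -/
theorem stmt13 (a b : ℝ) (γ : ℝ → Fin 3 → ℝ)
    (hγ : ContDiffOn ℝ 2 γ (Set.Ioo a b))
    (hsph : ∀ s ∈ Set.Ioo a b, dot3 (γ s) (γ s) = 1)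
    (hspeed : ∀ s ∈ Set.Ioo a b, dot3 (deriv γ s) (deriv γ s) = 1)
    (n : ℕ) (Ψ : MvPolynomial (Fin 3) ℝ) (hΨ : Ψ.IsHomogeneous n)
    (hrefl : ∀ s ∈ Set.Ioo a b, ∀ vm vp : Fin 3 → ℝ,
      dot3 vm vm = 1 → dot3 vp vp = 1 →
      dot3 vm (γ s) = 0 → dot3 vp (γ s) = 0 →
      dot3 vp (deriv γ s) = dot3 vm (deriv γ s) →
      eval (cross3 (γ s) vm) Ψ = eval (cross3 (γ s) vp) Ψ) :
    ∀ s ∈ Set.Ioo a b, ∀ ε : ℝ,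
      eval (cross3 (γ s) (deriv γ s)
          - ε • deriv (fun t => cross3 (γ t) (deriv γ t)) s) Ψ
        = eval (cross3 (γ s) (deriv γ s)
            + ε • deriv (fun t => cross3 (γ t) (deriv γ t)) s) Ψ := by
  simp only [cross3_eq_crossProduct, dot3_eq_dotProduct] at hsph hspeed hrefl ⊢
  intro s hs ε
  have hnhds : Set.Ioo a b ∈ 𝓝 s := isOpen_Ioo.mem_nhds hs
  have hγ' : HasDerivAt γ (deriv γ s) s :=
    ((hγ.contDiffAt hnhds).differentiableAt two_ne_zero).hasDerivAt
  have hγ'' : HasDerivAt (deriv γ) (deriv (deriv γ) s) s := by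
    have hderiv : ContDiffOn ℝ 1 (deriv γ) (Set.Ioo a b) :=
      ((contDiffOn_succ_iff_deriv_of_isOpen (n := 1) isOpen_Ioo).mp hγ).2.2
    exact ((hderiv.contDiffAt hnhds).differentiableAt one_ne_zero).hasDerivAt
  have huw : γ s ⬝ᵥ deriv γ s = 0 :=
    hγ'.dotProduct_eq_zero_of_eventually_dotProduct_self_eq (eventually_of_mem hnhds hsph)
  have hwg : deriv γ s ⬝ᵥ deriv (deriv γ) s = 0 :=
    hγ''.dotProduct_eq_zero_of_eventually_dotProduct_self_eq (eventually_of_mem hnhds hspeed)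
  have hΓ' : deriv (fun t => γ t ⨯₃ deriv γ t) s = γ s ⨯₃ deriv (deriv γ) s := by
    rw [(hγ'.crossProduct hγ'').deriv, cross_self, add_zero]
  rw [hΓ']
  exact ReflectionInvariantAt.eval_sub_smul_eq_eval_add_smul (hrefl s hs) hΨ (hsph s hs) huw hwg ε
end
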